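/- Let S and A be nonempty finite sets, let γ ∈ [0,1), let π : S → PMF(A) be a policy, let ρ⁰ ∈ PMF(S), and let P, Q : S → A → PMF(S) be two transition kernels satisfying Σ_{s' ∈ S} |P(s,a)(s') − Q(s,a)(s')| ≤ L_P for every s ∈ S and a ∈ A, where L_P ≥ 0. Let d^π(·, P) and d^π(·, Q) denote the discounted state occupancy measures d^π(s, K) = (1−γ) · Σ_{k=0}^{∞} γ^k · μ_k^K(s), where μ₀^K = ρ⁰ and μ_{k+1}^K(s') = Σ_s μ_k^K(s) · Σ_a π(s)(a) · K(s,a)(s') for K ∈ {P, Q}. Then Σ_{s ∈ S} |d^π(s, P) − d^π(s, Q)| ≤ γ · L_P / (1−γ). -/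

import Mathlib

noncomputable section

/-- Policy-mixed one-step state-to-state kernel: `K^π(s'|s) = ∑_a π(s)(a) · K(s,a)(s')`. -/
def kerPi {S A : Type*} [Fintype A] (π : S → PMF A) (K : S → A → PMF S)
    (s s' : S) : ℝ :=
  ∑ a : A, ((π s) a).toReal * ((K s a) s').toReal

/-- State distribution at time step `k` under policy `π`, kernel `K` and initial
distribution `ρ`: `μ₀ = ρ`, `μ_{k+1}(s') = ∑_s μ_k(s) · ∑_a π(s)(a) · K(s,a)(s')`. -/
def stateDist {S A : Type*} [Fintype S] [Fintype A] (π : S → PMF A)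
    (K : S → A → PMF S) (ρ : PMF S) : ℕ → S → ℝ
  | 0 => fun s => (ρ s).toReal
  | (k + 1) => fun s' => ∑ s : S, stateDist π K ρ k s * kerPi π K s s'

/-- Discounted state occupancy measure `d^π(s) = (1-γ) ∑_{k≥0} γ^k μ_k(s)`. -/
def occ {S A : Type*} [Fintype S] [Fintype A] (γ : ℝ) (π : S → PMF A)
    (K : S → A → PMF S) (ρ : PMF S) (s : S) : ℝ :=
  (1 - γ) * ∑' k : ℕ, γ ^ k * stateDist π K ρ k s

/-- Expected discounted return
`J(π, K, r) = ∑_{k≥0} γ^k ∑_s μ_k(s) ∑_a π(s)(a) r(s,a)`. -/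
def ret {S A : Type*} [Fintype S] [Fintype A] (γ : ℝ) (π : S → PMF A)
    (K : S → A → PMF S) (ρ : PMF S) (r : S × A → ℝ) : ℝ :=
  ∑' k : ℕ, γ ^ k * ∑ s : S, stateDist π K ρ k s * ∑ a : A, ((π s) a).toReal * r (s, a)

/-!
Write `μₖ^K` for the state distribution at step `k` and `K^π` for the policy-mixed kernel. Then
`μₖ₊₁^P - μₖ₊₁^Q = (μₖ^P - μₖ^Q) P^π + μₖ^Q (P^π - Q^π)`. Right multiplication by a matrix whose
rows have `ℓ₁`-norm at most `C` scales `ℓ₁`-norms by at most `C`; the rows of `P^π` have norm `1`,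
those of `P^π - Q^π` norm at most `L_P`, and `‖μₖ^Q‖₁ = 1`, so `‖μₖ^P - μₖ^Q‖₁ ≤ k L_P` by
induction. Summing against the discount weights,
`‖d^P - d^Q‖₁ ≤ (1 - γ) ∑ₖ γᵏ k L_P = γ L_P / (1 - γ)`.
-/

open Finset

theorem PMF.sum_toReal_eq_one {α : Type*} [Fintype α] (p : PMF α) : ∑ a, (p a).toReal = 1 := by
  rw [← ENNReal.toReal_sum fun a _ => p.apply_ne_top a,
    ← tsum_fintype (L := SummationFilter.unconditional α), p.tsum_coe, ENNReal.toReal_one]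

theorem PMF.sum_abs_toReal {α : Type*} [Fintype α] (p : PMF α) : ∑ a, |(p a).toReal| = 1 := by
  simp_rw [abs_of_nonneg ENNReal.toReal_nonneg]
  exact p.sum_toReal_eq_one

theorem sum_abs_sum_mul_le {ι κ : Type*} [Fintype ι] [Fintype κ] {C : ℝ} (x : ι → ℝ)
    (M : ι → κ → ℝ) (hM : ∀ i, ∑ j, |M i j| ≤ C) :
    ∑ j, |∑ i, x i * M i j| ≤ (∑ i, |x i|) * C :=
  calc ∑ j, |∑ i, x i * M i j| ≤ ∑ j, ∑ i, |x i| * |M i j| :=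
        sum_le_sum fun j _ => (abs_sum_le_sum_abs _ _).trans_eq (by simp_rw [abs_mul])
    _ = ∑ i, |x i| * ∑ j, |M i j| := by rw [sum_comm]; simp_rw [mul_sum]
    _ ≤ (∑ i, |x i|) * C := by
        rw [sum_mul]
        exact sum_le_sum fun i _ => mul_le_mul_of_nonneg_left (hM i) (abs_nonneg _)

theorem sum_abs_tsum_pow_mul_le {ι : Type*} [Fintype ι] {γ L : ℝ} (hγ0 : 0 ≤ γ) (hγ1 : γ < 1)
    (e : ℕ → ι → ℝ) (he : ∀ k, ∑ i, |e k i| ≤ k * L) :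
    ∑ i, |∑' k, γ ^ k * e k i| ≤ L * (γ / (1 - γ) ^ 2) := by
  have hγ : ‖γ‖ < 1 := by rwa [Real.norm_of_nonneg hγ0]
  have hbound (k : ℕ) : ∑ i, ‖γ ^ k * e k i‖ ≤ γ ^ k * (k * L) := by
    simp_rw [norm_mul, norm_pow, Real.norm_of_nonneg hγ0, Real.norm_eq_abs, ← mul_sum]
    exact mul_le_mul_of_nonneg_left (he k) (pow_nonneg hγ0 k)
  have hmajorant : Summable fun k : ℕ => γ ^ k * (k * L) :=
    ((summable_pow_mul_geometric_of_norm_lt_one 1 hγ).mul_right L).congr fun k => by ring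
  have hterm (i : ι) : Summable fun k => ‖γ ^ k * e k i‖ := by
    refine hmajorant.of_nonneg_of_le (fun k => norm_nonneg _) fun k => (hbound k).trans' ?_
    exact single_le_sum (f := fun i => ‖γ ^ k * e k i‖) (fun i _ => norm_nonneg _) (mem_univ i)
  calc ∑ i, |∑' k, γ ^ k * e k i| ≤ ∑ i, ∑' k, ‖γ ^ k * e k i‖ :=
        sum_le_sum fun i _ => norm_tsum_le_tsum_norm (hterm i)
    _ = ∑' k, ∑ i, ‖γ ^ k * e k i‖ := (Summable.tsum_finsetSum fun i _ => hterm i).symm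
    _ ≤ ∑' k : ℕ, γ ^ k * (k * L) := (summable_sum fun i _ => hterm i).tsum_le_tsum hbound hmajorant
    _ = L * (γ / (1 - γ) ^ 2) := by
        rw [← tsum_coe_mul_geometric_of_norm_lt_one hγ, ← tsum_mul_left]
        exact tsum_congr fun k => by ring

section StateDist

variable {S A : Type*} [Fintype S] [Fintype A] (π : S → PMF A)

theorem sum_abs_kerPi_le_one (K : S → A → PMF S) (s : S) : ∑ s', |kerPi π K s s'| ≤ 1 := by
  simpa only [kerPi, PMF.sum_abs_toReal, mul_one] using
    sum_abs_sum_mul_le (fun a => (π s a).toReal) (fun a s' => (K s a s').toReal)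
      fun a => (K s a).sum_abs_toReal.le

theorem sum_abs_kerPi_sub_le {P Q : S → A → PMF S} {L : ℝ}
    (h : ∀ s a, ∑ s', |(P s a s').toReal - (Q s a s').toReal| ≤ L) (s : S) :
    ∑ s', |kerPi π P s s' - kerPi π Q s s'| ≤ L := by
  simpa only [kerPi, ← sum_sub_distrib, ← mul_sub, PMF.sum_abs_toReal, one_mul] using
    sum_abs_sum_mul_le (fun a => (π s a).toReal) _ (h s)

theorem sum_abs_stateDist_le_one (K : S → A → PMF S) (ρ : PMF S) :
    ∀ k, ∑ s, |stateDist π K ρ k s| ≤ 1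
  | 0 => ρ.sum_abs_toReal.le
  | k + 1 => (sum_abs_sum_mul_le _ _ (sum_abs_kerPi_le_one π K)).trans <| by
      rw [mul_one]
      exact sum_abs_stateDist_le_one K ρ k

theorem summable_pow_mul_stateDist {γ : ℝ} (hγ : |γ| < 1) (K : S → A → PMF S) (ρ : PMF S)
    (s : S) : Summable fun k => γ ^ k * stateDist π K ρ k s := by
  refine (summable_geometric_of_lt_one (abs_nonneg γ) hγ).of_norm_bounded fun k => ?_
  rw [Real.norm_eq_abs, abs_mul, abs_pow]
  refine mul_le_of_le_one_right (pow_nonneg (abs_nonneg γ) k) ?_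
  exact (single_le_sum (fun s _ => abs_nonneg _) (mem_univ s)).trans
    (sum_abs_stateDist_le_one π K ρ k)

theorem occ_sub_occ {γ : ℝ} (hγ : |γ| < 1) (ρ : PMF S) (P Q : S → A → PMF S) (s : S) :
    occ γ π P ρ s - occ γ π Q ρ s =
      (1 - γ) * ∑' k, γ ^ k * (stateDist π P ρ k s - stateDist π Q ρ k s) := by
  rw [occ, occ, ← mul_sub, ← (summable_pow_mul_stateDist π hγ P ρ s).tsum_sub
    (summable_pow_mul_stateDist π hγ Q ρ s)]
  simp only [mul_sub]

theorem stateDist_succ_sub (ρ : PMF S) (P Q : S → A → PMF S) (k : ℕ) (s' : S) :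
    stateDist π P ρ (k + 1) s' - stateDist π Q ρ (k + 1) s' =
      ∑ s, (stateDist π P ρ k s - stateDist π Q ρ k s) * kerPi π P s s' +
        ∑ s, stateDist π Q ρ k s * (kerPi π P s s' - kerPi π Q s s') := by
  simp only [stateDist, ← sum_sub_distrib, ← sum_add_distrib]
  exact sum_congr rfl fun s _ => by ring

theorem sum_abs_stateDist_sub_le (ρ : PMF S) {P Q : S → A → PMF S} {L : ℝ} (hL : 0 ≤ L)
    (h : ∀ s a, ∑ s', |(P s a s').toReal - (Q s a s').toReal| ≤ L) :
    ∀ k : ℕ, ∑ s, |stateDist π P ρ k s - stateDist π Q ρ k s| ≤ k * L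
  | 0 => by simp [stateDist]
  | k + 1 => calc
      _ ≤ ∑ s', (|∑ s, (stateDist π P ρ k s - stateDist π Q ρ k s) * kerPi π P s s'| +
            |∑ s, stateDist π Q ρ k s * (kerPi π P s s' - kerPi π Q s s')|) :=
          sum_le_sum fun s' _ => by rw [stateDist_succ_sub]; exact abs_add_le _ _
      _ ≤ (∑ s, |stateDist π P ρ k s - stateDist π Q ρ k s|) * 1 +
            (∑ s, |stateDist π Q ρ k s|) * L := by
          rw [sum_add_distrib]
          exact add_le_add (sum_abs_sum_mul_le _ _ (sum_abs_kerPi_le_one π P))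
            (sum_abs_sum_mul_le _ _ (sum_abs_kerPi_sub_le π h))
      _ ≤ k * L * 1 + 1 * L := by
          gcongr
          exacts [sum_abs_stateDist_sub_le ρ hL h k, sum_abs_stateDist_le_one π Q ρ k]
      _ = (k + 1 : ℕ) * L := by push_cast; ring

end StateDist

theorem occ_l1_le_general {S A : Type*} [Fintype S] [Fintype A]
    (γ : ℝ) (hγ0 : 0 ≤ γ) (hγ1 : γ < 1)
    (π : S → PMF A) (ρ : PMF S)
    (P Q : S → A → PMF S)
    (L_P : ℝ) (hL : 0 ≤ L_P)
    (h : ∀ s : S, ∀ a : A, ∑ s' : S, |((P s a) s').toReal - ((Q s a) s').toReal| ≤ L_P) :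
    ∑ s : S, |occ γ π P ρ s - occ γ π Q ρ s| ≤ γ * L_P / (1 - γ) := by
  have hγ : |γ| < 1 := by rwa [abs_of_nonneg hγ0]
  have h1γ : 0 < 1 - γ := by linarith
  calc ∑ s, |occ γ π P ρ s - occ γ π Q ρ s|
      = (1 - γ) * ∑ s, |∑' k, γ ^ k * (stateDist π P ρ k s - stateDist π Q ρ k s)| := by
        simp_rw [occ_sub_occ π hγ, abs_mul, abs_of_pos h1γ, mul_sum]
    _ ≤ (1 - γ) * (L_P * (γ / (1 - γ) ^ 2)) :=
        mul_le_mul_of_nonneg_left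
          (sum_abs_tsum_pow_mul_le hγ0 hγ1 _ (sum_abs_stateDist_sub_le π ρ hL h)) h1γ.le
    _ = γ * L_P / (1 - γ) := by field_simp

/-- If two kernels are within ℓ₁ distance `L_P` uniformly in `(s,a)`, then
the ℓ₁ distance between their discounted occupancy measures is at most `γ L_P / (1-γ)`. -/
theorem occ_l1_le {S A : Type*} [Fintype S] [Fintype A] [Nonempty S] [Nonempty A]
    (γ : ℝ) (hγ0 : 0 ≤ γ) (hγ1 : γ < 1)
    (π : S → PMF A) (ρ : PMF S)
    (P Q : S → A → PMF S)
    (L_P : ℝ) (hL : 0 ≤ L_P)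
    (h : ∀ s : S, ∀ a : A, ∑ s' : S, |((P s a) s').toReal - ((Q s a) s').toReal| ≤ L_P) :
    ∑ s : S, |occ γ π P ρ s - occ γ π Q ρ s| ≤ γ * L_P / (1 - γ) :=
  occ_l1_le_general γ hγ0 hγ1 π ρ P Q L_P hL h
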